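/- Let k ≥ 1 and let n_0 > 1 be real. Let A_0, …, A_{k−1} be analytic on the unit disk D and belong to the Bloch space B, i.e. sup_{z∈D} |A_j'(z)|(1−|z|²) < ∞ for every j = 0, …, k−1. Suppose there exist θ ∈ [0, 2π) and ν ∈ [0,1) such that z_θ = ν e^{iθ} ∈ D satisfies A_j(z_θ) ≠ 0 for some j ∈ {0, …, k−1}, and let f be an analytic solution on D of (f^{(k)})^{n_0} + A_{k−1}(z)(f^{(k−1)})^{n_0} + ⋯ + A_1(z)(f')^{n_0} + A_0(z) f^{n_0} = 0. Then there exists a constant C > 0 such that for all r with max(ν, (e−1)/(e+1)) ≤ r < 1: |f'(re^{iθ})|^{n_0} ≤ C · log(1/(1−r)). -/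

import Mathlib

/-!
Along the ray `t ↦ t e`, `e = exp (iθ)`, put `u(t) = ∑_{j<k} |f^{(j)}(te)|` and
`S(t) = ∑_{j<k} |A_j(te)|`. Taking norms in the equation gives `|f^{(k)}|^{n₀} ≤ S u^{n₀}`,
hence `|f^{(k)}| ≤ (1 + S) u`, so that `u(s) ≤ u(0) + ∫₀ˢ (2 + S) u` and Grönwall's inequality
bounds `u(r)` by `u(0) exp ∫₀ʳ (2 + S)`. Bloch functions grow like `log (1/(1-t))`, which is
integrable up to `t = 1`, so `u` is bounded on the ray. Then
`|f'|^{n₀} ≤ (1 + S) u^{n₀} = O(log (1/(1-r)))`, and since `r` stays away from `0` the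
constant term is absorbed into the logarithm.
-/

open MeasureTheory Metric Set

lemma integral_inv_one_sub {s : ℝ} (hs : s < 1) :
    ∫ t in (0:ℝ)..s, (1 - t)⁻¹ = Real.log (1 / (1 - s)) := by
  rw [intervalIntegral.integral_comp_sub_left (fun x => x⁻¹) 1, sub_zero,
    integral_inv, one_div]
  intro h
  rw [mem_uIcc] at h
  rcases h with h | h <;> linarith [h.1, h.2]

lemma integral_log_one_div_one_sub_le {r : ℝ} (h0 : 0 ≤ r) (h1 : r < 1) :
    ∫ t in (0:ℝ)..r, Real.log (1 / (1 - t)) ≤ 1 := by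
  have hlog : Real.log (1 - r) ≤ 0 := Real.log_nonpos (by linarith) (by linarith)
  simp only [one_div, Real.log_inv]
  rw [intervalIntegral.integral_neg,
    intervalIntegral.integral_comp_sub_left (fun x => Real.log x) 1, integral_log]
  simp only [sub_zero, Real.log_one, mul_zero]
  nlinarith

lemma intervalIntegral_le_add_of_le_add_mul_log {w : ℝ → ℝ} {a b r : ℝ} (ha : 0 ≤ a)
    (hb : 0 ≤ b) (hr : r ∈ Ico (0:ℝ) 1) (hw : ContinuousOn w (Icc 0 r))
    (hle : ∀ t ∈ Icc 0 r, w t ≤ a + b * Real.log (1 / (1 - t))) :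
    ∫ t in (0:ℝ)..r, w t ≤ a + b := by
  have hlog : ContinuousOn (fun t : ℝ => Real.log (1 / (1 - t))) (Icc 0 r) :=
    ContinuousOn.log (by fun_prop (disch := intro t ht; have := ht.2; linarith [hr.2]))
      fun t ht => (one_div_pos.2 (by linarith [ht.2, hr.2])).ne'
  have hlogint := (hlog.intervalIntegrable_of_Icc (μ := volume) hr.1).const_mul b
  have hmono := intervalIntegral.integral_mono_on hr.1 (hw.intervalIntegrable_of_Icc hr.1)
    (intervalIntegrable_const.add hlogint) hle
  rw [intervalIntegral.integral_add intervalIntegrable_const hlogint,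
    intervalIntegral.integral_const, intervalIntegral.integral_const_mul] at hmono
  have := integral_log_one_div_one_sub_le hr.1 hr.2
  simp only [sub_zero, smul_eq_mul] at hmono
  nlinarith [hr.2]

lemma hasDerivAt_integral_of_continuousOn_Icc {g : ℝ → ℝ} {r s : ℝ}
    (hg : ContinuousOn g (Icc 0 r)) (hs : s ∈ Ioo 0 r) :
    HasDerivAt (fun s => ∫ t in (0:ℝ)..s, g t) (g s) s :=
  intervalIntegral.integral_hasDerivAt_right
    ((hg.mono (Icc_subset_Icc_right hs.2.le)).intervalIntegrable_of_Icc hs.1.le)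
    ((hg.mono Ioo_subset_Icc_self).stronglyMeasurableAtFilter isOpen_Ioo s hs)
    (hg.continuousAt (Icc_mem_nhds hs.1 hs.2))

lemma continuousOn_integral_of_continuousOn_Icc {g : ℝ → ℝ} {r : ℝ} (hr : 0 ≤ r)
    (hg : ContinuousOn g (Icc 0 r)) :
    ContinuousOn (fun s => ∫ t in (0:ℝ)..s, g t) (Icc 0 r) := by
  have := intervalIntegral.continuousOn_primitive_interval (μ := volume) (a := 0) (b := r)
    (f := g) (by rw [uIcc_of_le hr]; exact hg.integrableOn_compact isCompact_Icc)
  rwa [uIcc_of_le hr] at this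

lemma le_mul_exp_integral_of_le_add_integral {u w : ℝ → ℝ} {r : ℝ} (hr : 0 ≤ r)
    (hu : ContinuousOn u (Icc 0 r)) (hw : ContinuousOn w (Icc 0 r))
    (hw0 : ∀ t ∈ Icc 0 r, 0 ≤ w t)
    (h : ∀ s ∈ Icc 0 r, u s ≤ u 0 + ∫ t in (0:ℝ)..s, w t * u t) :
    u r ≤ u 0 * Real.exp (∫ t in (0:ℝ)..r, w t) := by
  set v : ℝ → ℝ := fun s => u 0 + ∫ t in (0:ℝ)..s, w t * u t with hv
  set W : ℝ → ℝ := fun s => ∫ t in (0:ℝ)..s, w t with hW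
  have hwu : ContinuousOn (fun t => w t * u t) (Icc 0 r) := hw.mul hu
  have hanti : AntitoneOn (fun s => v s * Real.exp (-W s)) (Icc 0 r) := by
    have hcont : ContinuousOn (fun s => v s * Real.exp (-W s)) (Icc 0 r) :=
      (continuousOn_const.add (continuousOn_integral_of_continuousOn_Icc hr hwu)).mul
        (continuousOn_integral_of_continuousOn_Icc hr hw).neg.rexp
    have hderiv : ∀ s ∈ Ioo 0 r, HasDerivAt (fun s => v s * Real.exp (-W s))
        (w s * (u s - v s) * Real.exp (-W s)) s := by
      intro s hs
      have := ((hasDerivAt_integral_of_continuousOn_Icc hwu hs).const_add (u 0)).mul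
        (hasDerivAt_integral_of_continuousOn_Icc hw hs).fun_neg.exp
      exact this.congr_deriv (by ring)
    refine antitoneOn_of_deriv_nonpos (convex_Icc 0 r) hcont ?_ ?_
    · rw [interior_Icc]
      exact fun s hs => (hderiv s hs).differentiableAt.differentiableWithinAt
    · rw [interior_Icc]
      intro s hs
      rw [(hderiv s hs).deriv]
      have hs' := Ioo_subset_Icc_self hs
      exact mul_nonpos_of_nonpos_of_nonneg
        (mul_nonpos_of_nonneg_of_nonpos (hw0 s hs') (sub_nonpos.2 (h s hs')))
        (Real.exp_nonneg _)
  have hr' : r ∈ Icc 0 r := right_mem_Icc.2 hr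
  have hφ := hanti (left_mem_Icc.2 hr) hr' hr
  simp only [hv, hW, intervalIntegral.integral_same, add_zero, neg_zero, Real.exp_zero,
    mul_one, Real.exp_neg] at hφ
  calc u r ≤ v r := h r hr'
    _ ≤ u 0 * Real.exp (W r) := by
      rwa [← div_eq_mul_inv, div_le_iff₀ (Real.exp_pos _)] at hφ

lemma ofReal_mul_mem_ball_zero_one {e : ℂ} (he : ‖e‖ = 1) {t : ℝ} (ht : t ∈ Ico 0 1) :
    (t : ℂ) * e ∈ ball (0 : ℂ) 1 := by
  rw [mem_ball_zero_iff, norm_mul, he, mul_one, Complex.norm_real, Real.norm_of_nonneg ht.1]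
  exact ht.2

lemma hasDerivAt_comp_ofReal_mul {G : ℂ → ℂ} {e : ℂ} {t : ℝ}
    (hG : DifferentiableAt ℂ G (t * e)) :
    HasDerivAt (fun s : ℝ => G (s * e)) (e * deriv G (t * e)) t := by
  have := (hG.hasDerivAt.comp (t : ℂ) (hasDerivAt_mul_const e)).comp_ofReal
  rwa [mul_comm] at this

lemma continuousOn_comp_ofReal_mul {G : ℂ → ℂ} (hG : ContinuousOn G (ball 0 1)) {e : ℂ}
    (he : ‖e‖ = 1) : ContinuousOn (fun t : ℝ => G (t * e)) (Ico 0 1) :=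
  hG.comp (by fun_prop) fun _ ht => ofReal_mul_mem_ball_zero_one he ht

lemma norm_comp_ofReal_mul_le {G : ℂ → ℂ} (hG : DifferentiableOn ℂ G (ball 0 1)) {e : ℂ}
    (he : ‖e‖ = 1) {s : ℝ} (hs : s ∈ Ico 0 1) :
    ‖G (s * e)‖ ≤ ‖G 0‖ + ∫ t in (0:ℝ)..s, ‖deriv G (t * e)‖ := by
  have hIcc : Icc 0 s ⊆ Ico 0 1 := Icc_subset_Ico_right hs.2
  have hderiv : ContinuousOn (fun t : ℝ => e * deriv G (t * e)) (Icc 0 s) :=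
    (continuousOn_const.mul (continuousOn_comp_ofReal_mul
      (hG.analyticOnNhd isOpen_ball).deriv.continuousOn he)).mono hIcc
  have hftc : ∫ t in (0:ℝ)..s, e * deriv G (t * e) = G (s * e) - G 0 := by
    rw [intervalIntegral.integral_eq_sub_of_hasDerivAt (f := fun t : ℝ => G (t * e))
      (fun t ht => hasDerivAt_comp_ofReal_mul ((hG.differentiableAt (isOpen_ball.mem_nhds
        (ofReal_mul_mem_ball_zero_one he (hIcc (by rwa [uIcc_of_le hs.1] at ht)))))))
      (hderiv.intervalIntegrable_of_Icc hs.1)]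
    simp
  have := intervalIntegral.norm_integral_le_integral_norm (μ := volume)
    (f := fun t : ℝ => e * deriv G (t * e)) hs.1
  simp only [hftc, norm_mul, he, one_mul] at this
  linarith [norm_sub_norm_le (G (s * e)) (G 0)]

def IsBloch (G : ℂ → ℂ) : Prop :=
  DifferentiableOn ℂ G (ball 0 1) ∧ ∃ M, ∀ z ∈ ball (0 : ℂ) 1, ‖deriv G z‖ * (1 - ‖z‖ ^ 2) ≤ M

lemma IsBloch.exists_norm_comp_ofReal_mul_le {G : ℂ → ℂ} (hG : IsBloch G) {e : ℂ}
    (he : ‖e‖ = 1) :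
    ∃ M ≥ 0, ∀ t ∈ Ico (0:ℝ) 1, ‖G (t * e)‖ ≤ ‖G 0‖ + M * Real.log (1 / (1 - t)) := by
  obtain ⟨hdiff, M, hM⟩ := hG
  have hM0 : 0 ≤ M := (norm_nonneg (deriv G 0)).trans (by simpa using hM 0 (mem_ball_self one_pos))
  refine ⟨M, hM0, fun t ht => (norm_comp_ofReal_mul_le hdiff he ht).trans ?_⟩
  have hIcc : Icc 0 t ⊆ Ico 0 1 := Icc_subset_Ico_right ht.2
  have hpt : ∀ s ∈ Icc 0 t, ‖deriv G (s * e)‖ ≤ M * (1 - s)⁻¹ := by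
    intro s hs
    obtain ⟨hs0, hs1⟩ := hIcc hs
    have hnorm : ‖(s : ℂ) * e‖ = s := by
      rw [norm_mul, he, mul_one, Complex.norm_real, Real.norm_of_nonneg hs0]
    have h := hM _ (ofReal_mul_mem_ball_zero_one he (hIcc hs))
    rw [hnorm] at h
    -- `1 - s ≤ 1 - s ^ 2` on `[0, 1)`
    rw [← div_eq_mul_inv, le_div_iff₀ (by linarith)]
    nlinarith [norm_nonneg (deriv G (s * e))]
  have hint : IntervalIntegrable (fun s : ℝ => (1 - s)⁻¹) volume 0 t :=
    ContinuousOn.intervalIntegrable_of_Icc ht.1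
      (continuousOn_const.sub continuousOn_id |>.inv₀ fun s hs => by
        have := (hIcc hs).2; simp; linarith)
  have hmono := intervalIntegral.integral_mono_on ht.1
    ((continuousOn_comp_ofReal_mul (hdiff.analyticOnNhd isOpen_ball).deriv.continuousOn he
      |>.norm.mono hIcc).intervalIntegrable_of_Icc ht.1) (hint.const_mul M) hpt
  rw [intervalIntegral.integral_const_mul, integral_inv_one_sub ht.2] at hmono
  linarith

lemma norm_rpow_le_sum_mul_sum_rpow {k : ℕ} {p : ℝ} (hp : 0 ≤ p) {x : ℂ} {a y : ℕ → ℂ}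
    (h : x ^ (p : ℂ) + ∑ j ∈ Finset.range k, a j * y j ^ (p : ℂ) = 0) :
    ‖x‖ ^ p ≤ (∑ j ∈ Finset.range k, ‖a j‖) * (∑ j ∈ Finset.range k, ‖y j‖) ^ p := by
  rw [← Complex.norm_cpow_real, eq_neg_of_add_eq_zero_left h, norm_neg, Finset.sum_mul]
  refine (norm_sum_le _ _).trans (Finset.sum_le_sum fun j hj => ?_)
  rw [norm_mul, Complex.norm_cpow_real]
  gcongr
  exact Finset.single_le_sum (f := fun i => ‖y i‖) (fun i _ => norm_nonneg _) hj

lemma le_one_add_mul_of_rpow_le_mul_rpow {x S U p : ℝ} (hS : 0 ≤ S)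
    (hU : 0 ≤ U) (hp : 1 ≤ p) (h : x ^ p ≤ S * U ^ p) : x ≤ (1 + S) * U := by
  by_contra! hlt
  have h1 : (1 + S) * U ^ p ≤ ((1 + S) * U) ^ p := by
    rw [Real.mul_rpow (by linarith) hU]
    gcongr
    simpa using Real.rpow_le_rpow_of_exponent_le (by linarith : 1 ≤ 1 + S) hp
  have h2 : ((1 + S) * U) ^ p < x ^ p := by gcongr
  nlinarith [Real.rpow_nonneg hU p]

lemma norm_le_one_add_sum_mul_sum {k : ℕ} {p : ℝ} (hp : 1 ≤ p) {a y : ℕ → ℂ}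
    (h : y k ^ (p : ℂ) + ∑ j ∈ Finset.range k, a j * y j ^ (p : ℂ) = 0) :
    ‖y k‖ ≤ (1 + ∑ j ∈ Finset.range k, ‖a j‖) * ∑ j ∈ Finset.range k, ‖y j‖ :=
  le_one_add_mul_of_rpow_le_mul_rpow (by positivity) (by positivity) hp
    (norm_rpow_le_sum_mul_sum_rpow (by linarith) h)

lemma norm_rpow_le_one_add_sum_mul_sum_rpow {k : ℕ} {p : ℝ} (hp : 0 ≤ p) {a y : ℕ → ℂ}
    (h : y k ^ (p : ℂ) + ∑ j ∈ Finset.range k, a j * y j ^ (p : ℂ) = 0) {i : ℕ} (hi : i ≤ k) :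
    ‖y i‖ ^ p ≤ (1 + ∑ j ∈ Finset.range k, ‖a j‖) * (∑ j ∈ Finset.range k, ‖y j‖) ^ p := by
  have hU : 0 ≤ (∑ j ∈ Finset.range k, ‖y j‖) ^ p := by positivity
  rcases hi.lt_or_eq with hi | rfl
  · have : ‖y i‖ ^ p ≤ (∑ j ∈ Finset.range k, ‖y j‖) ^ p := by
      gcongr
      exact Finset.single_le_sum (f := fun j => ‖y j‖) (fun j _ => norm_nonneg _)
        (Finset.mem_range.2 hi)
    nlinarith [Finset.sum_nonneg fun j (_ : j ∈ Finset.range k) => norm_nonneg (a j)]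
  · nlinarith [norm_rpow_le_sum_mul_sum_rpow hp h]

lemma sum_range_norm_succ_le (k : ℕ) (y : ℕ → ℂ) :
    ∑ j ∈ Finset.range k, ‖y (j + 1)‖ ≤ ∑ j ∈ Finset.range k, ‖y j‖ + ‖y k‖ := by
  have := Finset.sum_range_succ' (fun j => ‖y j‖) k
  rw [Finset.sum_range_succ] at this
  linarith [norm_nonneg (y 0)]

noncomputable def rayNormSum (g : ℕ → ℂ → ℂ) (k : ℕ) (e : ℂ) (t : ℝ) : ℝ :=
  ∑ j ∈ Finset.range k, ‖g j (t * e)‖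

section rayNormSum

variable {g : ℕ → ℂ → ℂ} {k : ℕ} {e : ℂ}

lemma rayNormSum_nonneg (t : ℝ) : 0 ≤ rayNormSum g k e t := by
  unfold rayNormSum; positivity

lemma continuousOn_rayNormSum (hg : ∀ j < k, ContinuousOn (g j) (ball 0 1)) (he : ‖e‖ = 1) :
    ContinuousOn (rayNormSum g k e) (Ico 0 1) :=
  continuousOn_finsetSum _ fun j hj =>
    (continuousOn_comp_ofReal_mul (hg j (Finset.mem_range.1 hj)) he).norm

lemma rayNormSum_le_add_integral (hg : ∀ j < k, DifferentiableOn ℂ (g j) (ball 0 1))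
    (he : ‖e‖ = 1) {s : ℝ} (hs : s ∈ Ico 0 1) :
    rayNormSum g k e s ≤
      rayNormSum g k e 0 + ∫ t in (0:ℝ)..s, rayNormSum (fun j => deriv (g j)) k e t := by
  have hcont : ∀ j ∈ Finset.range k, ContinuousOn (fun t : ℝ => ‖deriv (g j) (t * e)‖) (Icc 0 s) :=
    fun j hj => (continuousOn_comp_ofReal_mul
      ((hg j (Finset.mem_range.1 hj)).analyticOnNhd isOpen_ball).deriv.continuousOn he).norm.mono
      (Icc_subset_Ico_right hs.2)
  unfold rayNormSum
  rw [intervalIntegral.integral_finsetSum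
    fun j hj => (hcont j hj).intervalIntegrable_of_Icc hs.1, ← Finset.sum_add_distrib]
  refine Finset.sum_le_sum fun j hj => ?_
  simpa using norm_comp_ofReal_mul_le (hg j (Finset.mem_range.1 hj)) he hs

end rayNormSum

lemma IsBloch.exists_rayNormSum_le {A : ℕ → ℂ → ℂ} {k : ℕ} (hA : ∀ j < k, IsBloch (A j))
    {e : ℂ} (he : ‖e‖ = 1) :
    ∃ a ≥ 0, ∃ b ≥ 0, ∀ t ∈ Ico (0:ℝ) 1, rayNormSum A k e t ≤ a + b * Real.log (1 / (1 - t)) := by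
  induction k with
  | zero => exact ⟨0, le_rfl, 0, le_rfl, fun t _ => by simp [rayNormSum]⟩
  | succ k ih =>
    obtain ⟨a, ha, b, hb, hab⟩ := ih fun j hj => hA j (hj.trans k.lt_succ_self)
    obtain ⟨M, hM, hAk⟩ := (hA k k.lt_succ_self).exists_norm_comp_ofReal_mul_le he
    refine ⟨a + ‖A k 0‖, by positivity, b + M, by positivity, fun t ht => ?_⟩
    have := add_le_add (hab t ht) (hAk t ht)
    simp only [rayNormSum, Finset.sum_range_succ] at this ⊢
    linarith

section Equation

variable {k : ℕ} {p : ℝ} {A : ℕ → ℂ → ℂ} {f : ℂ → ℂ} {e : ℂ}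

lemma analyticOnNhd_iteratedDeriv (hf : DifferentiableOn ℂ f (ball 0 1)) (j : ℕ) :
    AnalyticOnNhd ℂ (iteratedDeriv j f) (ball 0 1) := by
  rw [iteratedDeriv_eq_iterate]
  exact (hf.analyticOnNhd isOpen_ball).iterated_deriv j

theorem exists_rayNormSum_iteratedDeriv_le (hp : 1 ≤ p) (hA : ∀ j < k, IsBloch (A j))
    (hf : DifferentiableOn ℂ f (ball 0 1))
    (heq : ∀ z ∈ ball (0:ℂ) 1, iteratedDeriv k f z ^ (p : ℂ) +
      ∑ j ∈ Finset.range k, A j z * iteratedDeriv j f z ^ (p : ℂ) = 0)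
    (he : ‖e‖ = 1) :
    ∃ B, ∀ r ∈ Ico (0:ℝ) 1, rayNormSum (fun j => iteratedDeriv j f) k e r ≤ B := by
  set u := rayNormSum (fun j => iteratedDeriv j f) k e
  set S := rayNormSum A k e
  obtain ⟨a, ha, b, hb, hS⟩ := IsBloch.exists_rayNormSum_le hA he
  have hu : ContinuousOn u (Ico 0 1) :=
    continuousOn_rayNormSum (fun j _ => (analyticOnNhd_iteratedDeriv hf j).continuousOn) he
  have hw : ContinuousOn (fun t => 2 + S t) (Ico 0 1) :=
    continuousOn_const.add (continuousOn_rayNormSum (fun j hj => (hA j hj).1.continuousOn) he)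
  have hgronwall : ∀ s ∈ Ico (0:ℝ) 1, u s ≤ u 0 + ∫ t in (0:ℝ)..s, (2 + S t) * u t := by
    intro s hs
    have hIcc : Icc 0 s ⊆ Ico 0 1 := Icc_subset_Ico_right hs.2
    have hderiv : ∀ t ∈ Icc 0 s,
        rayNormSum (fun j => deriv (iteratedDeriv j f)) k e t ≤ (2 + S t) * u t := by
      intro t ht
      have hk := norm_le_one_add_sum_mul_sum (y := fun j => iteratedDeriv j f (t * e)) hp
        (heq _ (ofReal_mul_mem_ball_zero_one he (hIcc ht)))
      have := sum_range_norm_succ_le k fun j => iteratedDeriv j f (t * e)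
      have hu0 := rayNormSum_nonneg (g := fun j => iteratedDeriv j f) (k := k) (e := e) t
      simp only [u, S, rayNormSum, ← iteratedDeriv_succ] at this hk hu0 ⊢
      nlinarith
    refine (rayNormSum_le_add_integral
      (fun j _ => (analyticOnNhd_iteratedDeriv hf j).differentiableOn) he hs).trans ?_
    gcongr
    refine intervalIntegral.integral_mono_on hs.1 ?_ ((hw.mul hu).mono hIcc
      |>.intervalIntegrable_of_Icc hs.1) hderiv
    simp only [← iteratedDeriv_succ]
    exact (continuousOn_rayNormSum
      (fun j _ => (analyticOnNhd_iteratedDeriv hf (j + 1)).continuousOn) he).mono hIcc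
      |>.intervalIntegrable_of_Icc hs.1
  refine ⟨u 0 * Real.exp (2 + a + b), fun r hr => ?_⟩
  have hIcc : Icc 0 r ⊆ Ico 0 1 := Icc_subset_Ico_right hr.2
  calc u r ≤ u 0 * Real.exp (∫ t in (0:ℝ)..r, (2 + S t)) :=
        le_mul_exp_integral_of_le_add_integral hr.1 (hu.mono hIcc) (hw.mono hIcc)
          (fun t _ => by positivity [rayNormSum_nonneg (g := A) (k := k) (e := e) t])
          fun s hs => hgronwall s (hIcc hs)
    _ ≤ u 0 * Real.exp (2 + a + b) := by
      gcongr
      · exact rayNormSum_nonneg 0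
      · exact intervalIntegral_le_add_of_le_add_mul_log (by positivity) hb hr (hw.mono hIcc)
          fun t ht => by linarith [hS t (hIcc ht)]

end Equation

lemma exists_pos_add_mul_log_le {r₀ : ℝ} (h0 : 0 < r₀) (h1 : r₀ < 1) {a b : ℝ} (ha : 0 ≤ a)
    (hb : 0 ≤ b) :
    ∃ C > 0, ∀ r, r₀ ≤ r → r < 1 →
      a + b * Real.log (1 / (1 - r)) ≤ C * Real.log (1 / (1 - r)) := by
  set ℓ := Real.log (1 / (1 - r₀))
  have hℓ : 0 < ℓ := Real.log_pos (by rw [lt_div_iff₀ (by linarith)]; linarith)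
  refine ⟨a / ℓ + b + 1, by positivity, fun r hr hr1 => ?_⟩
  have hL : ℓ ≤ Real.log (1 / (1 - r)) :=
    Real.log_le_log (by simp; linarith) (one_div_le_one_div_of_le (by linarith) (by linarith))
  have : a ≤ a / ℓ * Real.log (1 / (1 - r)) := by
    rw [div_mul_eq_mul_div, le_div_iff₀ hℓ]; gcongr
  nlinarith

theorem stmt14_general (k : ℕ) (hk : 1 ≤ k) (n0 : ℝ) (hn0 : 1 < n0)
    (A : ℕ → ℂ → ℂ) (hA : ∀ j < k, DifferentiableOn ℂ (A j) (ball (0:ℂ) 1))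
    (hABloch : ∀ j < k, ∃ M : ℝ, ∀ z ∈ ball (0:ℂ) 1,
      ‖deriv (A j) z‖ * (1 - ‖z‖ ^ 2) ≤ M)
    (θ ν : ℝ)
    (f : ℂ → ℂ) (hf : DifferentiableOn ℂ f (ball (0:ℂ) 1))
    (heq : ∀ z ∈ ball (0:ℂ) 1,
      (iteratedDeriv k f z) ^ ((n0 : ℝ) : ℂ) +
        ∑ j ∈ Finset.range k, A j z * (iteratedDeriv j f z) ^ ((n0 : ℝ) : ℂ) = 0) :
    ∃ C > (0:ℝ), ∀ r : ℝ,
      max ν ((Real.exp 1 - 1) / (Real.exp 1 + 1)) ≤ r → r < 1 →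
      ‖deriv f ((r : ℂ) * Complex.exp ((θ : ℂ) * Complex.I))‖ ^ n0 ≤
        C * Real.log (1 / (1 - r)) := by
  set e := Complex.exp ((θ : ℂ) * Complex.I)
  have he : ‖e‖ = 1 := Complex.norm_exp_ofReal_mul_I θ
  have hBloch : ∀ j < k, IsBloch (A j) := fun j hj => ⟨hA j hj, hABloch j hj⟩
  obtain ⟨a, ha, b, hb, hS⟩ := IsBloch.exists_rayNormSum_le hBloch he
  obtain ⟨B, hB⟩ := exists_rayNormSum_iteratedDeriv_le hn0.le hBloch hf heq he
  have hB0 : 0 ≤ B := (rayNormSum_nonneg 0).trans (hB 0 ⟨le_rfl, one_pos⟩)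
  have hexp : 1 < Real.exp 1 := Real.one_lt_exp_iff.2 one_pos
  obtain ⟨C, hC, hCle⟩ := exists_pos_add_mul_log_le (r₀ := (Real.exp 1 - 1) / (Real.exp 1 + 1))
    (div_pos (by linarith) (by positivity)) ((div_lt_one (by positivity)).2 (by linarith))
    (a := (1 + a) * B ^ n0) (b := b * B ^ n0) (by positivity) (by positivity)
  refine ⟨C, hC, fun r hr hr1 => ?_⟩
  have hr₀ := (le_max_right _ _).trans hr
  have hr' : r ∈ Ico (0:ℝ) 1 := ⟨le_trans (by positivity) hr₀, hr1⟩
  calc ‖deriv f (r * e)‖ ^ n0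
      ≤ (1 + rayNormSum A k e r) * rayNormSum (fun j => iteratedDeriv j f) k e r ^ n0 := by
        rw [← iteratedDeriv_one]
        exact norm_rpow_le_one_add_sum_mul_sum_rpow (y := fun j => iteratedDeriv j f (r * e))
          (by linarith) (heq _ (ofReal_mul_mem_ball_zero_one he hr')) hk
    _ ≤ (1 + (a + b * Real.log (1 / (1 - r)))) * B ^ n0 :=
        mul_le_mul (by linarith [hS r hr'])
          (Real.rpow_le_rpow (rayNormSum_nonneg r) (hB r hr') (by linarith))
          (Real.rpow_nonneg (rayNormSum_nonneg r) _)
          (by linarith [hS r hr', rayNormSum_nonneg (g := A) (k := k) (e := e) r])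
    _ = (1 + a) * B ^ n0 + b * B ^ n0 * Real.log (1 / (1 - r)) := by ring
    _ ≤ C * Real.log (1 / (1 - r)) := hCle r hr₀ hr1

theorem stmt14 (k : ℕ) (hk : 1 ≤ k) (n0 : ℝ) (hn0 : 1 < n0)
    (A : ℕ → ℂ → ℂ) (hA : ∀ j < k, DifferentiableOn ℂ (A j) (ball (0:ℂ) 1))
    (hABloch : ∀ j < k, ∃ M : ℝ, ∀ z ∈ ball (0:ℂ) 1,
      ‖deriv (A j) z‖ * (1 - ‖z‖ ^ 2) ≤ M)
    (θ ν : ℝ) (hθ : θ ∈ Set.Ico 0 (2 * Real.pi)) (hν : ν ∈ Set.Ico (0:ℝ) 1)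
    (hzθ : ∃ j < k, A j ((ν : ℂ) * Complex.exp ((θ : ℂ) * Complex.I)) ≠ 0)
    (f : ℂ → ℂ) (hf : DifferentiableOn ℂ f (ball (0:ℂ) 1))
    (heq : ∀ z ∈ ball (0:ℂ) 1,
      (iteratedDeriv k f z) ^ ((n0 : ℝ) : ℂ) +
        ∑ j ∈ Finset.range k, A j z * (iteratedDeriv j f z) ^ ((n0 : ℝ) : ℂ) = 0) :
    ∃ C > (0:ℝ), ∀ r : ℝ,
      max ν ((Real.exp 1 - 1) / (Real.exp 1 + 1)) ≤ r → r < 1 →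
      ‖deriv f ((r : ℂ) * Complex.exp ((θ : ℂ) * Complex.I))‖ ^ n0 ≤
        C * Real.log (1 / (1 - r)) :=
  stmt14_general k hk n0 hn0 A hA hABloch θ ν f hf heq
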